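/- arXiv:math/9505206 — 6 statements merged into one kernel-verified Lean document; each statement's English description precedes it below -/
import Mathlib

section
/- The double coset decomposition G(F) = B′(F)H(F) ⊔ B′(F)ηH(F) of Lecture VIII, formula (*): every g ∈ GL₂(E) can be written either as g = b·h or as g = b·η·h, where b ∈ GL₂(E) is upper triangular and h is the entrywise image in GL₂(E) of an element of GL₂(F); moreover the two cases are mutually exclusive (no g admits expressions of both kinds), so GL₂(E) is the disjoint union of the two double cosets B(E)·GL₂(F) and B(E)·η·GL₂(F). -/
open Matrix

lemma exists_repr' {F E : Type*} [Field F] [Field E] [Algebra F E]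
    (hdim : Module.finrank F E = 2) (θ : E)
    (hθ : θ ∉ Set.range (algebraMap F E)) (z : E) :
    ∃ u v : F, z = algebraMap F E u * θ + algebraMap F E v := by
  have hθ0 : θ ≠ 0 := fun h => hθ ⟨0, by simp [h]⟩
  have hli : LinearIndependent F ![(1 : E), θ] := by
    rw [linearIndependent_fin2]
    refine ⟨by simpa using hθ0, fun a ha => ?_⟩
    simp only [Matrix.cons_val_one, Matrix.head_cons, Matrix.cons_val_zero] at ha
    have ha0 : a ≠ 0 := by rintro rfl; simp at ha
    refine hθ ⟨a⁻¹, ?_⟩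
    rw [map_inv₀]
    rw [Algebra.smul_def] at ha
    exact (eq_inv_of_mul_eq_one_right ha).symm
  have : FiniteDimensional F E := FiniteDimensional.of_finrank_pos (by omega)
  have hspan : Submodule.span F (Set.range ![(1 : E), θ]) = ⊤ :=
    Submodule.eq_top_of_finrank_eq (by rw [finrank_span_eq_card hli, hdim]; simp)
  have hz : z ∈ Submodule.span F (Set.range ![(1 : E), θ]) := hspan ▸ Submodule.mem_top
  rw [Submodule.mem_span_range_iff_exists_fun] at hz
  obtain ⟨c, hc⟩ := hz
  refine ⟨c 1, c 0, ?_⟩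
  rw [← hc]
  simp [Fin.sum_univ_two, Algebra.smul_def]
  ring

lemma key' {F E : Type*} [Field F] [Field E] [Algebra F E]
    (θ : E) (hθ : θ ∉ Set.range (algebraMap F E))
    (a b c d p q : F) (hdet : a * d - b * c ≠ 0) (lam : E) (hlam : lam ≠ 0)
    (h1 : lam * (-θ * algebraMap F E a + algebraMap F E c) = algebraMap F E p)
    (h2 : lam * (-θ * algebraMap F E b + algebraMap F E d) = algebraMap F E q) :
    False := by
  set A := algebraMap F E with hA
  have hinj : Function.Injective A := (algebraMap F E).injective
  have hs : -θ * A b + A d ≠ 0 := by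
    intro h0
    by_cases hb : b = 0
    · subst hb
      have : d = 0 := by apply hinj; simpa using h0
      subst this; simp at hdet
    · have hAb : A b ≠ 0 := fun h => hb (hinj (by simp [h]))
      refine hθ ⟨d / b, ?_⟩
      rw [map_div₀]
      field_simp
      linear_combination h0
  have hq : q ≠ 0 := by
    rintro rfl
    exact (mul_ne_zero hlam hs) (by simpa using h2)
  have e1 : lam * ((-θ * A a + A c) * A q) = A p * A q := by rw [← mul_assoc, h1]
  have e2 : lam * ((-θ * A b + A d) * A p) = A q * A p := by rw [← mul_assoc, h2]
  have e3 : (-θ * A a + A c) * A q = (-θ * A b + A d) * A p :=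
    mul_left_cancel₀ hlam (by rw [e1, e2, mul_comm])
  have hcross : θ * (A p * A b - A a * A q) = A p * A d - A c * A q := by
    linear_combination e3
  have hpb : p * b - a * q = 0 := by
    by_contra h
    have hApb : A (p * b - a * q) ≠ 0 := fun h' => h (hinj (by simpa using h'))
    refine hθ ⟨(p * d - c * q) / (p * b - a * q), ?_⟩
    rw [map_div₀, eq_comm, eq_div_iff hApb]
    simp only [map_sub, _root_.map_mul]
    linear_combination hcross
  have hpd : p * d - c * q = 0 := by
    apply hinj
    have : A (p * b - a * q) = 0 := by rw [hpb]; simp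
    simp only [map_sub, _root_.map_mul] at this ⊢
    rw [map_zero]
    linear_combination θ * this - hcross
  apply hdet
  have : q * (a * d - b * c) = 0 := by linear_combination b * hpd - d * hpb
  rcases mul_eq_zero.mp this with h | h
  · exact absurd h hq
  · exact h


/-- The double coset decomposition `GL₂(E) = B(E)·GL₂(F) ⊔ B(E)·η·GL₂(F)` for a quadratic
extension `E/F` (char `F ≠ 2`), with `η = [[θ,1],[-θ,1]]` for `θ ∈ E \ F`. -/
theorem stmt1 {F E : Type*} [Field F] [Field E] [Algebra F E]
    (hchar : (2 : F) ≠ 0) (hdim : Module.finrank F E = 2)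
    (θ : E) (hθ : θ ∉ Set.range (algebraMap F E))
    (g : Matrix (Fin 2) (Fin 2) E) (hg : IsUnit g.det) :
    Xor'
      (∃ (b : Matrix (Fin 2) (Fin 2) E) (h₀ : Matrix (Fin 2) (Fin 2) F),
        IsUnit b.det ∧ b 1 0 = 0 ∧ IsUnit h₀.det ∧
        g = b * h₀.map (algebraMap F E))
      (∃ (b : Matrix (Fin 2) (Fin 2) E) (h₀ : Matrix (Fin 2) (Fin 2) F),
        IsUnit b.det ∧ b 1 0 = 0 ∧ IsUnit h₀.det ∧
        g = b * !![θ, 1; -θ, 1] * h₀.map (algebraMap F E)) := by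
  have hinj : Function.Injective (algebraMap F E) := (algebraMap F E).injective
  set A := algebraMap F E with hA
  -- Exclusivity
  have hnot : ¬ ((∃ (b : Matrix (Fin 2) (Fin 2) E) (h₀ : Matrix (Fin 2) (Fin 2) F),
        IsUnit b.det ∧ b 1 0 = 0 ∧ IsUnit h₀.det ∧
        g = b * h₀.map A) ∧
      (∃ (b : Matrix (Fin 2) (Fin 2) E) (h₀ : Matrix (Fin 2) (Fin 2) F),
        IsUnit b.det ∧ b 1 0 = 0 ∧ IsUnit h₀.det ∧
        g = b * !![θ, 1; -θ, 1] * h₀.map A)) := by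
    rintro ⟨⟨b, h₀, hbdet, hb10, hh0det, hgeq⟩,
            ⟨b', h₀', hbdet', hb10', hh0det', hgeq'⟩⟩
    have hb11 : b 1 1 ≠ 0 := by
      intro h
      rw [Matrix.det_fin_two, hb10, h] at hbdet
      simp [isUnit_iff_ne_zero] at hbdet
    have hb11' : b' 1 1 ≠ 0 := by
      intro h
      rw [Matrix.det_fin_two, hb10', h] at hbdet'
      simp [isUnit_iff_ne_zero] at hbdet'
    have E1 : ∀ j, g 1 j = b 1 1 * A (h₀ 1 j) := by
      intro j
      rw [hgeq]
      simp [Matrix.mul_apply, Fin.sum_univ_two, Matrix.map_apply, hb10]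
    have E2 : ∀ j, g 1 j = b' 1 1 * (-θ * A (h₀' 0 j) + A (h₀' 1 j)) := by
      intro j
      rw [hgeq']
      fin_cases j <;>
        simp [Matrix.mul_apply, Fin.sum_univ_two, Matrix.map_apply, hb10'] <;> ring
    have hk : ∀ j : Fin 2, (b' 1 1 / b 1 1) * (-θ * A (h₀' 0 j) + A (h₀' 1 j))
        = A (h₀ 1 j) := by
      intro j
      have e := (E1 j).symm.trans (E2 j)
      field_simp
      linear_combination -e
    have hdet' : h₀' 0 0 * h₀' 1 1 - h₀' 0 1 * h₀' 1 0 ≠ 0 := by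
      rw [Matrix.det_fin_two] at hh0det'
      exact isUnit_iff_ne_zero.mp hh0det'
    exact key' θ hθ (h₀' 0 0) (h₀' 0 1) (h₀' 1 0) (h₀' 1 1) (h₀ 1 0) (h₀ 1 1)
      hdet' (b' 1 1 / b 1 1) (div_ne_zero hb11' hb11) (hk 0) (hk 1)
  -- Existence
  have hor : (∃ (b : Matrix (Fin 2) (Fin 2) E) (h₀ : Matrix (Fin 2) (Fin 2) F),
        IsUnit b.det ∧ b 1 0 = 0 ∧ IsUnit h₀.det ∧
        g = b * h₀.map A) ∨
      (∃ (b : Matrix (Fin 2) (Fin 2) E) (h₀ : Matrix (Fin 2) (Fin 2) F),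
        IsUnit b.det ∧ b 1 0 = 0 ∧ IsUnit h₀.det ∧
        g = b * !![θ, 1; -θ, 1] * h₀.map A) := by
    by_cases h11 : g 1 1 = 0
    · -- first coset, via the Weyl element
      left
      refine ⟨!![g 0 1, g 0 0; 0, g 1 0], !![0, 1; 1, 0], ?_, by simp, ?_, ?_⟩
      · have h10 : g 1 0 ≠ 0 := by
          intro h
          rw [Matrix.det_fin_two, h11, h] at hg
          simp [isUnit_iff_ne_zero] at hg
        rw [Matrix.det_fin_two_of, isUnit_iff_ne_zero]
        intro h
        rcases mul_eq_zero.mp (show g 0 1 * g 1 0 = 0 by linear_combination h) with h' | h'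
        · rw [Matrix.det_fin_two, h11, h'] at hg
          simp [isUnit_iff_ne_zero] at hg
        · exact h10 h'
      · rw [Matrix.det_fin_two_of]; norm_num
      · ext i j
        fin_cases i <;> fin_cases j <;>
          simp [Matrix.mul_apply, Fin.sum_univ_two, Matrix.map_apply, h11]
    · by_cases hz : g 1 0 / g 1 1 ∈ Set.range A
      · -- first coset, unipotent
        left
        obtain ⟨s, hs⟩ := hz
        have hs' : g 1 0 = A s * g 1 1 := by
          rw [hs]; field_simp
        refine ⟨!![g 0 0 - g 0 1 * A s, g 0 1; 0, g 1 1], !![1, 0; s, 1],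
          ?_, by simp, by rw [Matrix.det_fin_two_of]; norm_num, ?_⟩
        · have : g = !![g 0 0 - g 0 1 * A s, g 0 1; 0, g 1 1] * (!![1, 0; s, 1] :
              Matrix (Fin 2) (Fin 2) F).map A := by
            ext i j
            fin_cases i <;> fin_cases j <;>
              simp [Matrix.mul_apply, Fin.sum_univ_two, Matrix.map_apply, hs'] <;> ring
          rw [this, Matrix.det_mul] at hg
          exact isUnit_of_mul_isUnit_left hg
        · ext i j
          fin_cases i <;> fin_cases j <;>
            simp [Matrix.mul_apply, Fin.sum_univ_two, Matrix.map_apply, hs'] <;> ring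
      · -- second coset
        right
        obtain ⟨u, v, huv⟩ := exists_repr' hdim θ hθ (g 1 0 / g 1 1)
        have hu : u ≠ 0 := by
          rintro rfl
          exact hz ⟨v, by rw [huv]; simp [hA]⟩
        have hθ0 : θ ≠ 0 := fun h => hθ ⟨0, by simp [h]⟩
        have hAu : A u ≠ 0 := fun h => hu (hinj (by simp [h]))
        have h2E : (2 : E) ≠ 0 := by
          intro h
          apply hchar
          apply hinj
          rw [map_ofNat]
          simpa using h
        set z := g 1 0 / g 1 1 with hzdef
        have hzg : z * g 1 1 = g 1 0 := div_mul_cancel₀ _ h11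
        set w : E := A v - θ * A u with hw
        have hΔ : w - z ≠ 0 := by
          intro h
          rw [huv, hw] at h
          apply mul_ne_zero (mul_ne_zero h2E hθ0) hAu
          linear_combination -h
        have hm : !![θ, 1; -θ, 1] * (!![-u, 0; v, 1] :
            Matrix (Fin 2) (Fin 2) F).map A = !![w, 1; z, 1] := by
          ext i j
          fin_cases i <;> fin_cases j <;>
            simp [Matrix.mul_apply, Fin.sum_univ_two, Matrix.map_apply, hw, huv] <;> ring
        have hprod : g = ((w - z)⁻¹ • (g * !![1, -1; -z, w])) * !![θ, 1; -θ, 1] *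
            (!![-u, 0; v, 1] : Matrix (Fin 2) (Fin 2) F).map A := by
          rw [mul_assoc, hm]
          ext i j
          fin_cases i <;> fin_cases j <;>
            (simp [Matrix.mul_apply, Fin.sum_univ_two, Matrix.smul_apply, smul_eq_mul]
             field_simp
             ring)
        refine ⟨(w - z)⁻¹ • (g * !![1, -1; -z, w]), !![-u, 0; v, 1], ?_, ?_, ?_, hprod⟩
        · have h' := hg
          rw [hprod, Matrix.det_mul, Matrix.det_mul] at h'
          exact isUnit_of_mul_isUnit_left (isUnit_of_mul_isUnit_left h')
        · simp only [Matrix.smul_apply, Matrix.mul_apply, Fin.sum_univ_two, smul_eq_mul]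
          have : g 1 0 * !![(1:E), -1; -z, w] 0 0 + g 1 1 * !![(1:E), -1; -z, w] 1 0 = 0 := by
            simp
            linear_combination -hzg
          rw [this, mul_zero]
        · rw [Matrix.det_fin_two_of]
          simp [isUnit_iff_ne_zero, hu]
  rcases hor with h | h
  · exact Or.inl ⟨h, fun hQ => hnot ⟨h, hQ⟩⟩
  · exact Or.inr ⟨h, fun hP => hnot ⟨hP, h⟩⟩
end

section
/- The 'simple yet important identity' of Lecture V, §2, relating hyperbolic and unipotent orbital integrals on GL₂(ℝ) (in Iwasawa-unfolded coordinates): for every a ∈ ℝ with a ≠ 1 the integral Φ_f(a) converges absolutely, U_f converges absolutely, and |1 − a⁻¹| · Φ_f(a) tends to U_f as a tends to 1 through values ≠ 1. Consequently, if Φ_f(a) = 0 for all a ≠ 1 (all hyperbolic orbital integrals of f vanish), then U_f = 0 (the unipotent orbital integral of f vanishes). -/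
open MeasureTheory Filter Topology

/-- The 'simple yet important identity' relating hyperbolic and unipotent orbital
integrals on `GL₂(ℝ)` (Lecture V, §2), in Iwasawa-unfolded coordinates. -/
theorem stmt2 (f : Matrix (Fin 2) (Fin 2) ℝ → ℂ)
    (hf : Continuous f) (hsupp : HasCompactSupport f) :
    (∀ a : ℝ, a ≠ 1 → Integrable (fun x : ℝ => f !![a, (a - 1) * x; 0, 1])) ∧
    Integrable (fun u : ℝ => f !![1, u; 0, 1]) ∧
    Tendsto (fun a : ℝ =>
        ((|1 - a⁻¹| : ℝ) : ℂ) * ∫ x : ℝ, f !![a, (a - 1) * x; 0, 1])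
      (𝓝[≠] (1 : ℝ)) (𝓝 (∫ u : ℝ, f !![1, u; 0, 1])) ∧
    ((∀ a : ℝ, a ≠ 1 → (∫ x : ℝ, f !![a, (a - 1) * x; 0, 1]) = 0) →
      (∫ u : ℝ, f !![1, u; 0, 1]) = 0) := by
  set φ : ℝ × ℝ → Matrix (Fin 2) (Fin 2) ℝ := fun p => !![p.1, p.2; 0, 1] with hφdef
  have hφc : Continuous φ := by
    apply continuous_pi; intro i; apply continuous_pi; intro j
    fin_cases i <;> fin_cases j <;> simp [φ] <;> fun_prop
  have hli : Function.LeftInverse (fun M : Matrix (Fin 2) (Fin 2) ℝ => (M 0 0, M 0 1)) φ := by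
    intro p; simp [φ]
  have hψc : Continuous (fun M : Matrix (Fin 2) (Fin 2) ℝ => (M 0 0, M 0 1)) :=
    ((continuous_apply _).comp (continuous_apply _)).prodMk
      ((continuous_apply _).comp (continuous_apply _))
  have hφemb : Topology.IsClosedEmbedding φ := hli.isClosedEmbedding hψc hφc
  set F : ℝ × ℝ → ℂ := f ∘ φ with hFdef
  have hFc : Continuous F := hf.comp hφc
  have hFsupp : HasCompactSupport F := hsupp.comp_isClosedEmbedding hφemb
  have hsec : ∀ a : ℝ, Integrable (fun u : ℝ => F (a, u)) := by
    intro a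
    have hemb : Topology.IsClosedEmbedding (fun u : ℝ => (a, u)) :=
      (Function.LeftInverse.isClosedEmbedding (f := Prod.snd) (fun u => rfl)
        continuous_snd (Continuous.prodMk_right a))
    exact (hFc.comp (Continuous.prodMk_right a)).integrable_of_hasCompactSupport
      (hFsupp.comp_isClosedEmbedding hemb)
  have hint : ∀ a : ℝ, a ≠ 1 → Integrable (fun x : ℝ => F (a, (a - 1) * x)) := by
    intro a ha
    exact ((integrable_comp_mul_left_iff (fun u => F (a, u)) (sub_ne_zero.mpr ha)).2 (hsec a))
  have hcov : ∀ a : ℝ, (∫ x : ℝ, F (a, (a - 1) * x)) = |(a-1)⁻¹| • ∫ u : ℝ, F (a, u) :=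
    fun a => Measure.integral_comp_mul_left (fun u => F (a, u)) (a - 1)
  -- continuity of the parametric integral
  obtain ⟨C, hC⟩ := hFc.bounded_above_of_compact_support hFsupp
  set s : Set ℝ := Prod.snd '' tsupport F with hsdef
  have hs : IsCompact s := hFsupp.image continuous_snd
  have hGcont : ContinuousAt (fun a : ℝ => ∫ u : ℝ, F (a, u)) 1 := by
    apply continuousAt_of_dominated (bound := s.indicator fun _ => C)
    · exact Eventually.of_forall fun a =>
        (hFc.comp (Continuous.prodMk_right a)).aestronglyMeasurable
    · refine Eventually.of_forall fun a => Eventually.of_forall fun u => ?_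
      by_cases hu : (a, u) ∈ tsupport F
      · have : u ∈ s := ⟨(a, u), hu, rfl⟩
        simpa [Set.indicator_of_mem this] using hC (a, u)
      · have h0 : F (a, u) = 0 := image_eq_zero_of_notMem_tsupport hu
        rw [h0]
        simp only [norm_zero]
        exact Set.indicator_nonneg (fun x _ => le_trans (norm_nonneg _) (hC (x, x))) u
    · rw [integrable_indicator_iff hs.isClosed.measurableSet]
      exact integrableOn_const hs.measure_lt_top.ne
    · exact Eventually.of_forall fun u =>
        (hFc.comp (continuous_id.prodMk continuous_const)).continuousAt
  -- the limit statement
  have htend : Tendsto (fun a : ℝ =>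
        ((|1 - a⁻¹| : ℝ) : ℂ) * ∫ x : ℝ, F (a, (a - 1) * x))
      (𝓝[≠] (1 : ℝ)) (𝓝 (∫ u : ℝ, F (1, u))) := by
    have h0 : ∀ᶠ a in 𝓝[≠] (1 : ℝ), a ≠ 0 :=
      eventually_nhdsWithin_of_eventually_nhds (eventually_ne_nhds one_ne_zero)
    have h1 : ∀ᶠ a in 𝓝[≠] (1 : ℝ), a ≠ 1 := eventually_mem_nhdsWithin
    have hev : ∀ᶠ a in 𝓝[≠] (1 : ℝ),
        ((|a|⁻¹ : ℝ) : ℂ) * ∫ u : ℝ, F (a, u) =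
          ((|1 - a⁻¹| : ℝ) : ℂ) * ∫ x : ℝ, F (a, (a - 1) * x) := by
      filter_upwards [h0, h1] with a ha0 ha1
      rw [hcov a, Complex.real_smul, ← mul_assoc, ← Complex.ofReal_mul]
      congr 2
      rw [← abs_inv, ← abs_mul]
      have h2 : a - 1 ≠ 0 := sub_ne_zero.mpr ha1
      have key : (1 - a⁻¹) * (a - 1)⁻¹ = a⁻¹ := by
        rw [show (1 : ℝ) - a⁻¹ = (a - 1) * a⁻¹ by
            rw [sub_mul, mul_inv_cancel₀ ha0, one_mul],
          mul_right_comm, mul_inv_cancel₀ h2, one_mul]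
      first
      | exact key
      | exact key.symm
      | (congr 1; first | exact key | exact key.symm)
    have hcont : ContinuousAt (fun a : ℝ => ((|a|⁻¹ : ℝ) : ℂ) * ∫ u : ℝ, F (a, u)) 1 := by
      apply ContinuousAt.mul _ hGcont
      exact Complex.continuous_ofReal.continuousAt.comp
        ((continuous_abs.continuousAt).inv₀ (by norm_num))
    have := (hcont.tendsto.mono_left (nhdsWithin_le_nhds (s := {(1:ℝ)}ᶜ)))
    simp only [abs_one, inv_one, Complex.ofReal_one, one_mul] at this
    exact this.congr' hev
  refine ⟨hint, hsec 1, htend, fun h => ?_⟩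
  have hz : Tendsto (fun a : ℝ =>
        ((|1 - a⁻¹| : ℝ) : ℂ) * ∫ x : ℝ, F (a, (a - 1) * x))
      (𝓝[≠] (1 : ℝ)) (𝓝 0) := by
    apply Tendsto.congr' _ tendsto_const_nhds
    filter_upwards [eventually_mem_nhdsWithin] with a (ha : a ≠ 1)
    rw [show (∫ x : ℝ, F (a, (a - 1) * x)) = 0 from h a ha, mul_zero]
  exact tendsto_nhds_unique htend hz
end

section
/- The unramified local Tate integral (Lecture V, Remarks after Proposition 1.2): for every prime p and every s ∈ ℂ with Re s > 0, the function x ↦ ‖x‖^(s−1) (interpreted as exp((s−1)·log ‖x‖) for x ≠ 0 and as 0 at x = 0) is μ-integrable on ℤ_p, and ∫_{ℤ_p} ‖x‖^(s−1) dμ(x) = (1 − p⁻¹) / (1 − p^(−s)). In particular the normalized integral (1 − p⁻¹)⁻¹ · ∫_{ℤ_p} ‖x‖^(s−1) dμ(x) equals the local L-factor (1 − p^(−s))⁻¹. -/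
open MeasureTheory
open scoped ENNReal NNReal
set_option linter.unusedSectionVars false

variable {p : ℕ} [Fact p.Prime]

lemma exists_residue (y : ℚ_[p]) (hy : ‖y‖ ≤ 1) :
    ∃ i : ℕ, i < p ∧ ‖y - (i : ℚ_[p])‖ ≤ (p : ℝ)⁻¹ := by
  set z : ℤ_[p] := ⟨y, hy⟩ with hz
  refine ⟨z.appr 1, by simpa using z.appr_lt 1, ?_⟩
  have h := PadicInt.appr_spec 1 z
  rw [pow_one, Ideal.mem_span_singleton] at h
  have h2 : ‖z - (z.appr 1 : ℤ_[p])‖ ≤ (p : ℝ)⁻¹ := by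
    obtain ⟨c, hc⟩ := h
    rw [hc, norm_mul, PadicInt.norm_p]
    calc (p:ℝ)⁻¹ * ‖c‖ ≤ (p:ℝ)⁻¹ * 1 :=
      mul_le_mul_of_nonneg_left c.norm_le_one (by positivity)
    _ = (p:ℝ)⁻¹ := mul_one _
  have h3 : ((z - (z.appr 1 : ℤ_[p]) : ℤ_[p]) : ℚ_[p]) = y - (z.appr 1 : ℚ_[p]) := by
    push_cast
    rfl
  rwa [PadicInt.norm_def, h3] at h2

/-- closed ball of radius `p^{-n}` in `ℚ_p`. -/
def pBall (p : ℕ) [Fact p.Prime] (n : ℕ) : Set ℚ_[p] := {x | ‖x‖ ≤ (p : ℝ) ^ (-(n : ℤ))}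

lemma one_lt_p : (1 : ℝ) < p := by
  exact_mod_cast (Fact.out : p.Prime).one_lt

lemma p_pos : (0 : ℝ) < p := lt_trans one_pos one_lt_p

lemma pBall_measurableSet [MeasurableSpace ℚ_[p]] [BorelSpace ℚ_[p]] (n : ℕ) :
    MeasurableSet (pBall p n) :=
  (isClosed_le continuous_norm continuous_const).measurableSet

lemma pBall_antitone {m n : ℕ} (h : m ≤ n) : pBall p n ⊆ pBall p m := fun x hx =>
  le_trans hx (zpow_le_zpow_right₀ (le_of_lt one_lt_p) (by omega))

lemma pq_ne_zero : (p : ℚ_[p]) ≠ 0 :=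
  Nat.cast_ne_zero.2 (Fact.out : p.Prime).ne_zero

lemma pBall_partition (n : ℕ) :
    pBall p n = ⋃ i ∈ Finset.range p,
      (fun x : ℚ_[p] => x + -((i : ℚ_[p]) * (p : ℚ_[p]) ^ n)) ⁻¹' pBall p (n + 1) := by
  have hppos := p_pos (p := p)
  have hpn : ‖(p : ℚ_[p]) ^ n‖ = (p : ℝ) ^ (-(n : ℤ)) := Padic.norm_p_pow n
  have hpow : (0:ℝ) < (p:ℝ) ^ (-(n:ℤ)) := zpow_pos hppos _
  ext x
  simp only [Set.mem_iUnion, Set.mem_preimage, Finset.mem_range, pBall, Set.mem_setOf_eq,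
    ← sub_eq_add_neg]
  constructor
  · intro hx
    set y : ℚ_[p] := x / (p : ℚ_[p]) ^ n with hy
    have hyn : ‖y‖ ≤ 1 := by
      rw [hy, norm_div, hpn, div_le_one hpow]
      exact hx
    obtain ⟨i, hip, hi⟩ := exists_residue y hyn
    refine ⟨i, hip, ?_⟩
    have hxy : x - (i : ℚ_[p]) * (p : ℚ_[p]) ^ n = (y - i) * (p : ℚ_[p]) ^ n := by
      rw [hy, sub_mul, div_mul_cancel₀ _ (pow_ne_zero _ pq_ne_zero)]
    rw [hxy, norm_mul, hpn]
    calc ‖y - (i:ℚ_[p])‖ * (p:ℝ) ^ (-(n:ℤ)) ≤ (p:ℝ)⁻¹ * (p:ℝ) ^ (-(n:ℤ)) :=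
          mul_le_mul_of_nonneg_right hi (le_of_lt hpow)
      _ = (p:ℝ) ^ (-((n:ℤ)+1)) := by
          rw [neg_add, zpow_add₀ (ne_of_gt hppos), zpow_neg_one, mul_comm]
      _ = (p:ℝ) ^ (-(((n:ℕ)+1 : ℕ):ℤ)) := by norm_cast
  · rintro ⟨i, hip, hi⟩
    have h1 : ‖(i : ℚ_[p]) * (p:ℚ_[p]) ^ n‖ ≤ (p:ℝ) ^ (-(n:ℤ)) := by
      rw [norm_mul, hpn]
      have : ‖(i : ℚ_[p])‖ ≤ 1 := by
        have := Padic.norm_int_le_one (p := p) (i : ℤ)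
        push_cast at this ⊢
        exact this
      calc ‖(i:ℚ_[p])‖ * (p:ℝ)^(-(n:ℤ)) ≤ 1 * (p:ℝ)^(-(n:ℤ)) :=
            mul_le_mul_of_nonneg_right this (le_of_lt hpow)
        _ = _ := one_mul _
    have h2 : ‖x - (i:ℚ_[p]) * (p:ℚ_[p])^n‖ ≤ (p:ℝ) ^ (-(n:ℤ)) :=
      le_trans hi (zpow_le_zpow_right₀ (le_of_lt one_lt_p) (by omega))
    calc ‖x‖ = ‖(x - (i:ℚ_[p]) * (p:ℚ_[p])^n) + (i:ℚ_[p]) * (p:ℚ_[p])^n‖ := by ring_nf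
      _ ≤ max ‖x - (i:ℚ_[p]) * (p:ℚ_[p])^n‖ ‖(i:ℚ_[p]) * (p:ℚ_[p])^n‖ := Padic.nonarchimedean _ _
      _ ≤ (p:ℝ) ^ (-(n:ℤ)) := max_le h2 h1

lemma nat_norm_eq_one {i j : ℕ} (hip : i < p) (hjp : j < p) (hij : i ≠ j) :
    ‖(i : ℚ_[p]) - (j : ℚ_[p])‖ = 1 := by
  have hcast : ((((i:ℤ) - (j:ℤ)) : ℤ) : ℚ_[p]) = (i : ℚ_[p]) - j := by push_cast; ring
  have hle : ‖(i : ℚ_[p]) - (j : ℚ_[p])‖ ≤ 1 := by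
    rw [← hcast]; exact Padic.norm_int_le_one _
  have hnlt : ¬ ‖(i : ℚ_[p]) - (j : ℚ_[p])‖ < 1 := by
    rw [← hcast, Padic.norm_intCast_lt_one_iff]
    intro hdvd
    have : (i:ℤ) - j = 0 := Int.eq_zero_of_abs_lt_dvd hdvd (by
      rw [abs_sub_lt_iff]; omega)
    omega
  exact le_antisymm hle (not_lt.mp hnlt)

lemma pBall_disjoint (n : ℕ) : Set.PairwiseDisjoint (Finset.range p : Set ℕ)
    (fun i => (fun x : ℚ_[p] => x + -((i : ℚ_[p]) * (p : ℚ_[p]) ^ n)) ⁻¹' pBall p (n + 1)) := by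
  intro i hi j hj hij
  simp only [Finset.coe_range, Set.mem_Iio] at hi hj
  rw [Function.onFun, Set.disjoint_left]
  rintro x hxi hxj
  simp only [Set.mem_preimage, pBall, Set.mem_setOf_eq, ← sub_eq_add_neg] at hxi hxj
  have key : ‖((i : ℚ_[p]) - j) * (p:ℚ_[p])^n‖ ≤ (p:ℝ) ^ (-((n:ℕ)+1:ℕ):ℤ) := by
    have : ((i : ℚ_[p]) - j) * (p:ℚ_[p])^n
        = (x - (j:ℚ_[p]) * (p:ℚ_[p])^n) + -(x - (i:ℚ_[p]) * (p:ℚ_[p])^n) := by ring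
    rw [this]
    calc ‖(x - (j:ℚ_[p]) * (p:ℚ_[p])^n) + -(x - (i:ℚ_[p]) * (p:ℚ_[p])^n)‖
        ≤ max ‖x - (j:ℚ_[p]) * (p:ℚ_[p])^n‖ ‖-(x - (i:ℚ_[p]) * (p:ℚ_[p])^n)‖ :=
          Padic.nonarchimedean _ _
      _ ≤ _ := by rw [norm_neg]; exact max_le hxj hxi
  rw [norm_mul, nat_norm_eq_one hi hj hij, one_mul, Padic.norm_p_pow] at key
  have : ((-((n:ℕ)+1:ℕ):ℤ) : ℤ) < -(n:ℤ) := by push_cast; omega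
  exact absurd key (not_le.mpr ((zpow_lt_zpow_iff_right₀ one_lt_p).mpr this))

variable [MeasurableSpace ℚ_[p]] [BorelSpace ℚ_[p]]
  (μ : Measure ℚ_[p]) [μ.IsAddHaarMeasure]

lemma measure_pBall_succ (n : ℕ) : μ (pBall p n) = p * μ (pBall p (n + 1)) := by
  rw [pBall_partition (p := p) n,
    measure_biUnion_finset (pBall_disjoint n)
      (fun i _ => (measurable_add_const _) (pBall_measurableSet (n+1)))]
  have : ∀ i ∈ Finset.range p,
      μ ((fun x : ℚ_[p] => x + -((i : ℚ_[p]) * (p : ℚ_[p]) ^ n)) ⁻¹' pBall p (n + 1))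
        = μ (pBall p (n + 1)) := fun i _ => measure_preimage_add_right μ _ _
  rw [Finset.sum_congr rfl this, Finset.sum_const, Finset.card_range, nsmul_eq_mul]

lemma measure_pBall (hμ : μ {x : ℚ_[p] | ‖x‖ ≤ 1} = 1) (n : ℕ) :
    μ (pBall p n) = (p : ℝ≥0∞)⁻¹ ^ n := by
  have hp0 : (p : ℝ≥0∞) ≠ 0 := by
    simp [(Fact.out : p.Prime).ne_zero]
  have hpt : (p : ℝ≥0∞) ≠ ⊤ := ENNReal.natCast_ne_top p
  induction n with
  | zero =>
    simpa [pBall] using hμ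
  | succ n ih =>
    have h := measure_pBall_succ (p := p) μ n
    have : (p : ℝ≥0∞)⁻¹ * μ (pBall p n) = μ (pBall p (n+1)) := by
      rw [h, ← mul_assoc, ENNReal.inv_mul_cancel hp0 hpt, one_mul]
    rw [← this, ih, pow_succ, mul_comm]

/-- The shell `{x : ‖x‖ = p^{-n}}`. -/
def pShell (p : ℕ) [Fact p.Prime] (n : ℕ) : Set ℚ_[p] := pBall p n \ pBall p (n + 1)

lemma pShell_measurableSet (n : ℕ) : MeasurableSet (pShell p n) :=
  (pBall_measurableSet n).diff (pBall_measurableSet (n+1))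

lemma norm_of_mem_pShell {n : ℕ} {x : ℚ_[p]} (hx : x ∈ pShell p n) :
    ‖x‖ = (p : ℝ) ^ (-(n : ℤ)) := by
  obtain ⟨h1, h2⟩ := hx
  simp only [pBall, Set.mem_setOf_eq, not_le] at h1 h2
  have hx0 : x ≠ 0 := by
    rintro rfl
    simp only [norm_zero] at h2
    exact absurd h2 (not_lt.mpr (le_of_lt (zpow_pos (p_pos (p := p)) _)))
  rw [Padic.norm_eq_zpow_neg_valuation hx0] at h1 h2 ⊢
  have e1 : -x.valuation ≤ -(n:ℤ) := (zpow_le_zpow_iff_right₀ (one_lt_p (p := p))).mp h1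
  have e2 : (-((n:ℕ)+1:ℕ):ℤ) < -x.valuation := (zpow_lt_zpow_iff_right₀ (one_lt_p (p := p))).mp h2
  congr 1
  push_cast at e2
  omega

lemma pShell_disjoint : Pairwise (Function.onFun Disjoint (pShell p)) := by
  have key : ∀ m n : ℕ, m < n → Disjoint (pShell p m) (pShell p n) := by
    intro m n h
    rw [Set.disjoint_left]
    intro x hxm hxn
    exact hxm.2 (pBall_antitone (by omega) hxn.1)
  intro m n hmn
  rcases hmn.lt_or_gt with h | h
  · exact key m n h
  · exact (key n m h).symm

lemma iUnion_pShell : (⋃ n, pShell p n) = pBall p 0 \ {0} := by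
  ext x
  simp only [Set.mem_iUnion, Set.mem_diff, Set.mem_singleton_iff]
  constructor
  · rintro ⟨n, hx⟩
    refine ⟨pBall_antitone (Nat.zero_le n) hx.1, ?_⟩
    rintro rfl
    have := norm_of_mem_pShell hx
    rw [norm_zero] at this
    exact absurd this.symm (ne_of_gt (zpow_pos (p_pos (p := p)) _))
  · rintro ⟨hx, hx0⟩
    refine ⟨x.valuation.toNat, ?_, ?_⟩
    · simp only [pBall, Set.mem_setOf_eq, Padic.norm_eq_zpow_neg_valuation hx0]
      apply zpow_le_zpow_right₀ (le_of_lt (one_lt_p (p := p)))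
      have hv : 0 ≤ x.valuation := by
        by_contra hneg
        push_neg at hneg
        have : (p:ℝ) ^ (0:ℤ) < (p:ℝ) ^ (-x.valuation) :=
          (zpow_lt_zpow_iff_right₀ (one_lt_p (p := p))).mpr (by omega)
        rw [zpow_zero] at this
        rw [pBall, Set.mem_setOf_eq, Padic.norm_eq_zpow_neg_valuation hx0] at hx
        simp only [Nat.cast_zero, neg_zero, zpow_zero] at hx
        linarith
      omega
    · simp only [pBall, Set.mem_setOf_eq, Padic.norm_eq_zpow_neg_valuation hx0, not_le]
      apply (zpow_lt_zpow_iff_right₀ (one_lt_p (p := p))).mpr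
      have hv : 0 ≤ x.valuation := by
        by_contra hneg
        push_neg at hneg
        have : (p:ℝ) ^ (0:ℤ) < (p:ℝ) ^ (-x.valuation) :=
          (zpow_lt_zpow_iff_right₀ (one_lt_p (p := p))).mpr (by omega)
        rw [zpow_zero] at this
        rw [pBall, Set.mem_setOf_eq, Padic.norm_eq_zpow_neg_valuation hx0] at hx
        simp only [Nat.cast_zero, neg_zero, zpow_zero] at hx
        linarith
      push_cast
      omega

lemma measure_pShell (hμ : μ {x : ℚ_[p] | ‖x‖ ≤ 1} = 1) (n : ℕ) :
    μ (pShell p n) = (p : ℝ≥0∞)⁻¹ ^ n - (p : ℝ≥0∞)⁻¹ ^ (n + 1) := by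
  rw [pShell, measure_diff (pBall_antitone (Nat.le_succ n))
    (pBall_measurableSet (n+1)).nullMeasurableSet
    (by rw [measure_pBall μ hμ]; exact ENNReal.pow_ne_top (ENNReal.inv_ne_top.mpr (by
      simp [(Fact.out : p.Prime).ne_zero]))),
    measure_pBall μ hμ, measure_pBall μ hμ]

open scoped Classical in
theorem tate_unramified_aux (p : ℕ) [Fact p.Prime]
    [MeasurableSpace ℚ_[p]] [BorelSpace ℚ_[p]]
    (μ : Measure ℚ_[p]) [μ.IsAddHaarMeasure]
    (hμ : μ {x : ℚ_[p] | ‖x‖ ≤ 1} = 1)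
    (s : ℂ) (hs : 0 < s.re) :
    IntegrableOn (fun x : ℚ_[p] =>
        if x = 0 then 0 else Complex.exp ((s - 1) * (Real.log ‖x‖ : ℂ)))
      {x : ℚ_[p] | ‖x‖ ≤ 1} μ ∧
    (∫ x in {x : ℚ_[p] | ‖x‖ ≤ 1},
        (if x = 0 then 0 else Complex.exp ((s - 1) * (Real.log ‖x‖ : ℂ))) ∂μ)
      = (1 - (p : ℂ)⁻¹) / (1 - (p : ℂ) ^ (-s)) ∧
    (1 - (p : ℂ)⁻¹)⁻¹ * (∫ x in {x : ℚ_[p] | ‖x‖ ≤ 1},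
        (if x = 0 then 0 else Complex.exp ((s - 1) * (Real.log ‖x‖ : ℂ))) ∂μ)
      = (1 - (p : ℂ) ^ (-s))⁻¹ := by
  have hp1 : (1:ℝ) < p := one_lt_p
  have hppos : (0:ℝ) < p := p_pos
  have hpc0 : (p : ℂ) ≠ 0 := Nat.cast_ne_zero.2 (Fact.out : p.Prime).ne_zero
  set f : ℚ_[p] → ℂ :=
    fun x => if x = 0 then 0 else Complex.exp ((s - 1) * (Real.log ‖x‖ : ℂ)) with hf
  set q : ℂ := Complex.exp ((1 - s) * (Real.log p : ℂ)) with hq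
  set T : ℂ := (p : ℂ)⁻¹ * q with hT
  -- the ball is `pBall p 0`
  have hball : {x : ℚ_[p] | ‖x‖ ≤ 1} = pBall p 0 := by
    simp [pBall]
  -- f equals q^n on the n-th shell
  have hfs : ∀ n : ℕ, ∀ x ∈ pShell p n, f x = q ^ n := by
    intro n x hx
    have hx0 : x ≠ 0 := by
      rintro rfl
      have := norm_of_mem_pShell hx
      rw [norm_zero] at this
      exact absurd this.symm (ne_of_gt (zpow_pos hppos _))
    rw [hf]
    simp only [if_neg hx0]
    rw [norm_of_mem_pShell hx, Real.log_zpow, ← Complex.exp_nat_mul]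
    congr 1
    push_cast
    ring
  -- norm computations
  have hnq : ‖q‖ = Real.exp ((1 - s.re) * Real.log p) := by
    rw [hq, Complex.norm_exp]
    congr 1
    simp [Complex.mul_re, Complex.log_re, Complex.log_im, Complex.natCast_arg,
      Complex.norm_natCast]
  have hnT : ‖T‖ = Real.exp (-s.re * Real.log p) := by
    rw [hT, norm_mul, norm_inv, RCLike.norm_natCast, hnq]
    rw [show (p:ℝ)⁻¹ = Real.exp (-(Real.log p)) by
      rw [Real.exp_neg, Real.exp_log hppos]]
    rw [← Real.exp_add]
    ring_nf
  have hT1 : ‖T‖ < 1 := by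
    rw [hnT, Real.exp_lt_one_iff]
    have := Real.log_pos hp1
    nlinarith
  -- measure of shells in ℝ
  have hμS : ∀ n : ℕ, (μ (pShell p n)).toReal = ((p:ℝ)⁻¹)^n * (1 - (p:ℝ)⁻¹) := by
    intro n
    have hple : (p : ℝ≥0∞)⁻¹ ^ (n+1) ≤ (p : ℝ≥0∞)⁻¹ ^ n :=
      pow_le_pow_right_of_le_one' (ENNReal.inv_le_one.mpr (by
        exact_mod_cast Nat.one_le_cast.mpr (Fact.out : p.Prime).one_lt.le)) (Nat.le_succ n)
    rw [measure_pShell μ hμ n, ENNReal.toReal_sub_of_le hple (ENNReal.pow_ne_top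
      (ENNReal.inv_ne_top.mpr (by simp [(Fact.out : p.Prime).ne_zero])))]
    rw [ENNReal.toReal_pow, ENNReal.toReal_pow, ENNReal.toReal_inv, ENNReal.toReal_natCast]
    ring
  -- integrable on each shell
  have hSfin : ∀ n : ℕ, μ (pShell p n) < ⊤ := by
    intro n
    rw [measure_pShell μ hμ n]
    exact lt_of_le_of_lt tsub_le_self (ENNReal.pow_lt_top (ENNReal.inv_lt_top.mpr
      (by exact_mod_cast Nat.cast_pos.mpr (Fact.out : p.Prime).pos)))
  have hint : ∀ n : ℕ, IntegrableOn f (pShell p n) μ := by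
    intro n
    refine (integrableOn_const (C := q ^ n) (hSfin n).ne).congr ?_
    exact (ae_restrict_iff' (pShell_measurableSet n)).mpr
      (ae_of_all _ fun x hx => (hfs n x hx).symm)
  -- the norm integrals over shells
  have hnorm_int : ∀ n : ℕ, (∫ x in pShell p n, ‖f x‖ ∂μ)
      = ((p:ℝ)⁻¹)^n * (1 - (p:ℝ)⁻¹) * ‖q‖^n := by
    intro n
    rw [setIntegral_congr_fun (pShell_measurableSet n)
      (fun x hx => by show ‖f x‖ = ‖q ^ n‖; rw [hfs n x hx] :
        Set.EqOn (fun x => ‖f x‖) (fun _ => ‖q^n‖) _)]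
    rw [setIntegral_const, measureReal_def, hμS n, smul_eq_mul, norm_pow]
  -- summability
  have hr0 : (0:ℝ) ≤ (p:ℝ)⁻¹ * ‖q‖ := by positivity
  have hr1 : (p:ℝ)⁻¹ * ‖q‖ < 1 := by
    have : (p:ℝ)⁻¹ * ‖q‖ = ‖T‖ := by
      rw [hT, norm_mul, norm_inv, RCLike.norm_natCast]
    rw [this]; exact hT1
  have hsum : Summable fun n : ℕ => ∫ x in pShell p n, ‖f x‖ ∂μ := by
    have : ∀ n : ℕ, (∫ x in pShell p n, ‖f x‖ ∂μ)
        = (1 - (p:ℝ)⁻¹) * ((p:ℝ)⁻¹ * ‖q‖)^n := by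
      intro n; rw [hnorm_int n, mul_pow]; ring
    simp_rw [this]
    exact (summable_geometric_of_lt_one hr0 hr1).mul_left _
  -- integrability on the union
  have hIU : IntegrableOn f (⋃ n, pShell p n) μ :=
    integrableOn_iUnion_of_summable_integral_norm
      hint hsum
  -- μ {0} = 0
  have h0 : μ ({0} : Set ℚ_[p]) = 0 := measure_singleton 0
  have hae : ({x : ℚ_[p] | ‖x‖ ≤ 1} : Set ℚ_[p]) =ᵐ[μ] ⋃ n, pShell p n := by
    rw [hball, iUnion_pShell, MeasureTheory.ae_eq_set]
    constructor
    · refine measure_mono_null ?_ h0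
      intro x hx
      simp only [Set.mem_diff, Set.mem_singleton_iff, not_and, not_not] at hx ⊢
      exact hx.2 hx.1
    · refine measure_mono_null ?_ h0
      rintro x ⟨⟨h1, _⟩, h2⟩
      exact absurd h1 h2
  have hint_ball : IntegrableOn f {x : ℚ_[p] | ‖x‖ ≤ 1} μ :=
    hIU.congr_set_ae hae
  -- the integral value
  have hval : (∫ x in {x : ℚ_[p] | ‖x‖ ≤ 1}, f x ∂μ)
      = (1 - (p:ℂ)⁻¹) * (1 - T)⁻¹ := by
    rw [setIntegral_congr_set hae,
      integral_iUnion (fun n => pShell_measurableSet n)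
        (pShell_disjoint (p := p)) hIU]
    have hterm : ∀ n : ℕ, (∫ x in pShell p n, f x ∂μ) = (1 - (p:ℂ)⁻¹) * T^n := by
      intro n
      rw [setIntegral_congr_fun (pShell_measurableSet n) (fun x hx => hfs n x hx),
        setIntegral_const, measureReal_def, hμS n, hT, mul_pow, Complex.real_smul]
      push_cast
      ring
    simp_rw [hterm]
    rw [tsum_mul_left, tsum_geometric_of_norm_lt_one hT1]
  -- T = p^{-s}
  have hTs : T = (p:ℂ) ^ (-s) := by
    rw [Complex.cpow_def_of_ne_zero hpc0, hT, hq]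
    have hlog : Complex.log (p:ℂ) = (Real.log p : ℂ) := by
      rw [show ((p:ℕ):ℂ) = ((p:ℝ):ℂ) by push_cast; rfl]
      exact (Complex.ofReal_log hppos.le).symm
    rw [hlog]
    have : ((1:ℂ) - s) * (Real.log p : ℂ)
        = (Real.log p : ℂ) + (Real.log p : ℂ) * (-s) := by ring
    rw [this, Complex.exp_add, ← mul_assoc]
    have : ((p:ℂ))⁻¹ * Complex.exp (Real.log p : ℂ) = 1 := by
      rw [← Complex.ofReal_exp, Real.exp_log hppos]
      exact inv_mul_cancel₀ (by exact_mod_cast hpc0)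
    rw [this, one_mul]
  have h1T : (1:ℂ) - T ≠ 0 := by
    intro h
    have : T = 1 := by linear_combination -h
    rw [this, norm_one] at hT1
    exact lt_irrefl _ hT1
  have h1p : (1:ℂ) - (p:ℂ)⁻¹ ≠ 0 := by
    intro h
    have : (p:ℂ)⁻¹ = 1 := by linear_combination -h
    rw [inv_eq_one] at this
    exact absurd (by exact_mod_cast this : p = 1) (Fact.out : p.Prime).ne_one
  refine ⟨hint_ball, ?_, ?_⟩
  · rw [show (∫ x in {x : ℚ_[p] | ‖x‖ ≤ 1},
        (if x = 0 then 0 else Complex.exp ((s - 1) * (Real.log ‖x‖ : ℂ))) ∂μ)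
      = (∫ x in {x : ℚ_[p] | ‖x‖ ≤ 1}, f x ∂μ) from rfl, hval, ← hTs, div_eq_mul_inv]
  · rw [show (∫ x in {x : ℚ_[p] | ‖x‖ ≤ 1},
        (if x = 0 then 0 else Complex.exp ((s - 1) * (Real.log ‖x‖ : ℂ))) ∂μ)
      = (∫ x in {x : ℚ_[p] | ‖x‖ ≤ 1}, f x ∂μ) from rfl, hval, ← hTs, ← mul_assoc,
      inv_mul_cancel₀ h1p, one_mul]

open scoped Classical in
/-- The unramified local Tate integral: for `Re s > 0`,
`∫_{ℤ_p} ‖x‖^(s-1) dμ(x) = (1 - p⁻¹)/(1 - p^(-s))` for `μ` the Haar measure on `ℚ_p`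
normalized by `μ(ℤ_p) = 1`. -/
theorem stmt3 (p : ℕ) [Fact p.Prime]
    [MeasurableSpace ℚ_[p]] [BorelSpace ℚ_[p]]
    (μ : Measure ℚ_[p]) [μ.IsAddHaarMeasure]
    (hμ : μ {x : ℚ_[p] | ‖x‖ ≤ 1} = 1)
    (s : ℂ) (hs : 0 < s.re) :
    IntegrableOn (fun x : ℚ_[p] =>
        if x = 0 then 0 else Complex.exp ((s - 1) * (Real.log ‖x‖ : ℂ)))
      {x : ℚ_[p] | ‖x‖ ≤ 1} μ ∧
    (∫ x in {x : ℚ_[p] | ‖x‖ ≤ 1},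
        (if x = 0 then 0 else Complex.exp ((s - 1) * (Real.log ‖x‖ : ℂ))) ∂μ)
      = (1 - (p : ℂ)⁻¹) / (1 - (p : ℂ) ^ (-s)) ∧
    (1 - (p : ℂ)⁻¹)⁻¹ * (∫ x in {x : ℚ_[p] | ‖x‖ ≤ 1},
        (if x = 0 then 0 else Complex.exp ((s - 1) * (Real.log ‖x‖ : ℂ))) ∂μ)
      = (1 - (p : ℂ) ^ (-s))⁻¹ := by
  exact tate_unramified_aux p μ hμ s hs
end

section
/- The archimedean ingredient of Tate's theory used in Proposition 1.2 of Lecture IV (meromorphic continuation of the local zeta integral with its simple pole and residue): for every Schwartz function F : ℝ → ℂ, (i) for every s ∈ ℂ with Re s > 0 the integral Z_F(s) = ∫_ℝ F(a)·|a|^(s−1) da converges absolutely, and (ii) there exists a function G : ℂ → ℂ which is holomorphic on the half-plane {s : Re s > −1} such that Z_F(s) = 2·F(0)/s + G(s) for all s with Re s > 0. In particular Z_F extends meromorphically to Re s > −1 with at worst a simple pole at s = 0 of residue 2·F(0). -/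
open MeasureTheory

namespace Stmt4Aux

open Set Filter Asymptotics Complex
open scoped Topology

noncomputable section

lemma schwartz_isBigO_atTop (F : SchwartzMap ℝ ℂ) (a : ℝ) :
    (fun x : ℝ => F x) =O[atTop] fun x : ℝ => x ^ (-a) := by
  refine ((F.isBigO_cocompact_rpow (-a)).mono atTop_le_cocompact).congr' EventuallyEq.rfl ?_
  filter_upwards [eventually_ge_atTop (0 : ℝ)] with x hx
  rw [Real.norm_of_nonneg hx]

lemma schwartz_neg_isBigO_atTop (F : SchwartzMap ℝ ℂ) (a : ℝ) :
    (fun x : ℝ => F (-x)) =O[atTop] fun x : ℝ => x ^ (-a) := by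
  have ht : Tendsto (fun x : ℝ => -x) atTop (Filter.cocompact ℝ) :=
    tendsto_neg_atTop_atBot.mono_right atBot_le_cocompact
  refine ((F.isBigO_cocompact_rpow (-a)).comp_tendsto ht).congr' EventuallyEq.rfl ?_
  filter_upwards [eventually_ge_atTop (0 : ℝ)] with x hx
  simp only [Function.comp_apply, norm_neg]
  rw [Real.norm_of_nonneg hx]

lemma cont_isBigO_zero {f : ℝ → ℂ} (hc : Continuous f) :
    f =O[𝓝[>] (0:ℝ)] fun x : ℝ => x ^ (-(0:ℝ)) := by
  have h1 : f =O[𝓝[>] (0:ℝ)] (fun _ : ℝ => (1:ℝ)) :=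
    ((hc.tendsto 0).mono_left nhdsWithin_le_nhds).isBigO_one ℝ
  refine h1.congr' EventuallyEq.rfl ?_
  filter_upwards with x
  simp

lemma mellinConv_of_cont {f : ℝ → ℂ} (hc : Continuous f)
    (htop : ∀ a : ℝ, f =O[atTop] fun x : ℝ => x ^ (-a)) {s : ℂ} (hs : 0 < s.re) :
    MellinConvergent f s :=
  mellinConvergent_of_isBigO_rpow ((hc.locallyIntegrable).locallyIntegrableOn _)
    (htop (s.re + 1)) (lt_add_one _) (cont_isBigO_zero hc) hs

lemma integrableOn_Iic_of_neg {f : ℝ → ℂ}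
    (h : IntegrableOn (fun x => f (-x)) (Ioi (0:ℝ))) : IntegrableOn f (Iic (0:ℝ)) := by
  have h_map_neg : (volume.restrict (Ici (0:ℝ))).map Neg.neg = volume.restrict (Iic (0:ℝ)) := by
    conv => rhs; rw [← Measure.map_neg_eq_self (volume : Measure ℝ),
      measurableEmbedding_neg.restrict_map]
    simp
  rw [IntegrableOn, ← h_map_neg, measurableEmbedding_neg.integrable_map_iff]
  exact Iff.mpr integrableOn_Ici_iff_integrableOn_Ioi h

lemma weight_eq {s : ℂ} {x : ℝ} (hx : 0 < x) [Decidable (x = 0)] :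
    (if x = 0 then (0:ℂ) else Complex.exp ((s - 1) * (Real.log |x| : ℂ))) = (x : ℂ) ^ (s - 1) := by
  rw [if_neg hx.ne', abs_of_pos hx,
    Complex.cpow_def_of_ne_zero (by exact_mod_cast hx.ne'), Complex.ofReal_log hx.le, mul_comm]

lemma weight_eq_neg {s : ℂ} {x : ℝ} (hx : 0 < x) [Decidable (-x = 0)] :
    (if -x = 0 then (0:ℂ) else Complex.exp ((s - 1) * (Real.log |(-x)| : ℂ)))
      = (x : ℂ) ^ (s - 1) := by
  rw [if_neg (by simpa using hx.ne'), abs_neg, abs_of_pos hx,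
    Complex.cpow_def_of_ne_zero (by exact_mod_cast hx.ne'), Complex.ofReal_log hx.le, mul_comm]

end

end Stmt4Aux

open Stmt4Aux Set Filter Asymptotics
open scoped Topology

set_option maxHeartbeats 1000000 in
open scoped Classical in
/-- The archimedean local zeta integral of a Schwartz function converges for `Re s > 0`
and extends meromorphically to `Re s > -1` with a simple pole at `s = 0` of residue
`2·F(0)`. -/
theorem stmt4 (F : SchwartzMap ℝ ℂ) :
    (∀ s : ℂ, 0 < s.re →
      Integrable (fun a : ℝ =>
        F a * (if a = 0 then 0 else Complex.exp ((s - 1) * (Real.log |a| : ℂ))))) ∧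
    ∃ G : ℂ → ℂ, DifferentiableOn ℂ G {s : ℂ | -1 < s.re} ∧
      ∀ s : ℂ, 0 < s.re →
        (∫ a : ℝ,
            F a * (if a = 0 then 0 else Complex.exp ((s - 1) * (Real.log |a| : ℂ))))
          = 2 * F 0 / s + G s := by
  set g : ℝ → ℂ := fun x => F x + F (-x) with hg_def
  set ind : ℝ → ℂ := Set.indicator (Ioc (0:ℝ) 1) (fun _ => 2 * F 0) with hind_def
  set h : ℝ → ℂ := fun x => g x - ind x with hh_def
  have hg_cont : Continuous g := F.continuous.add (F.continuous.comp continuous_neg)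
  have hg_top : ∀ a : ℝ, g =O[atTop] fun x : ℝ => x ^ (-a) := fun a =>
    (schwartz_isBigO_atTop F a).add (schwartz_neg_isBigO_atTop F a)
  have hFneg_cont : Continuous fun x : ℝ => F (-x) := F.continuous.comp continuous_neg
  -- integrability on `Ioi 0` of the two halves
  have hIoi : ∀ {s : ℂ}, 0 < s.re → IntegrableOn (fun a : ℝ =>
      F a * (if a = 0 then 0 else Complex.exp ((s - 1) * (Real.log |a| : ℂ)))) (Ioi 0) := by
    intro s hs
    have hconv : IntegrableOn (fun t : ℝ => (t:ℂ) ^ (s-1) • F t) (Ioi 0) :=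
      mellinConv_of_cont F.continuous (schwartz_isBigO_atTop F) hs
    refine hconv.congr_fun ?_ measurableSet_Ioi
    intro x hx
    simp only [smul_eq_mul]
    rw [weight_eq (s := s) hx, mul_comm]
  have hIoiNeg : ∀ {s : ℂ}, 0 < s.re → IntegrableOn (fun x : ℝ =>
      F (-x) * (if -x = 0 then 0 else Complex.exp ((s - 1) * (Real.log |(-x)| : ℂ))))
      (Ioi 0) := by
    intro s hs
    have hconv : IntegrableOn (fun t : ℝ => (t:ℂ) ^ (s-1) • F (-t)) (Ioi 0) :=
      mellinConv_of_cont hFneg_cont (schwartz_neg_isBigO_atTop F) hs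
    refine hconv.congr_fun ?_ measurableSet_Ioi
    intro x hx
    simp only [smul_eq_mul]
    rw [weight_eq_neg (s := s) hx, mul_comm]
  have hIic : ∀ {s : ℂ}, 0 < s.re → IntegrableOn (fun a : ℝ =>
      F a * (if a = 0 then 0 else Complex.exp ((s - 1) * (Real.log |a| : ℂ)))) (Iic 0) :=
    fun hs => integrableOn_Iic_of_neg (hIoiNeg hs)
  have hInt : ∀ s : ℂ, 0 < s.re → Integrable (fun a : ℝ =>
      F a * (if a = 0 then 0 else Complex.exp ((s - 1) * (Real.log |a| : ℂ)))) := by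
    intro s hs
    rw [← integrableOn_univ, ← Iic_union_Ioi (a := (0:ℝ))]
    exact integrableOn_union.2 ⟨hIic hs, hIoi hs⟩
  refine ⟨hInt, mellin h, ?_, ?_⟩
  · -- differentiability of G = mellin h on {re > -1}
    intro s hs
    have hs' : -1 < s.re := hs
    have hind_int : Integrable ind := by
      rw [hind_def]
      exact (integrable_indicator_iff measurableSet_Ioc).2
        (integrableOn_const measure_Ioc_lt_top.ne)
    have hloc : LocallyIntegrableOn h (Ioi 0) :=
      ((hg_cont.locallyIntegrable).sub hind_int.locallyIntegrable).locallyIntegrableOn _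
    have h_top : h =O[atTop] fun x : ℝ => x ^ (-(s.re + 1)) := by
      refine (hg_top (s.re + 1)).congr' ?_ EventuallyEq.rfl
      filter_upwards [eventually_gt_atTop (1:ℝ)] with x hx
      have : ind x = 0 :=
        Set.indicator_of_notMem (fun hm => absurd hm.2 (not_le.2 hx)) _
      simp [hh_def, this]
    -- Lipschitz bound for F
    obtain ⟨C, hCpos, hC⟩ := (SchwartzMap.derivCLM ℝ ℂ F).decay 0 0
    have hC' : ∀ x : ℝ, ‖deriv (F : ℝ → ℂ) x‖ ≤ C := by
      intro x
      have := hC x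
      simpa [norm_iteratedFDeriv_zero, SchwartzMap.derivCLM_apply] using this
    have hlip : ∀ x y : ℝ, ‖F x - F y‖ ≤ C * ‖x - y‖ := fun x y =>
      convex_univ.norm_image_sub_le_of_norm_deriv_le
        (fun z _ => F.differentiable.differentiableAt) (fun z _ => hC' z)
        (mem_univ y) (mem_univ x)
    have h_bot : h =O[𝓝[>] (0:ℝ)] fun x : ℝ => x ^ (-(-1:ℝ)) := by
      have hrw : (fun x : ℝ => x ^ (-(-1:ℝ))) = fun x : ℝ => x ^ (1:ℝ) := by norm_num
      rw [hrw]
      refine IsBigO.of_bound (2 * C) ?_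
      filter_upwards [Ioc_mem_nhdsGT_of_mem (by constructor <;> norm_num :
        (0:ℝ) ∈ Ico (0:ℝ) 1)] with x hx
      have hx0 : 0 < x := hx.1
      have hind : ind x = 2 * F 0 := Set.indicator_of_mem hx _
      have hsplit : h x = (F x - F 0) + (F (-x) - F 0) := by
        simp only [hh_def, hg_def, hind]; ring
      have h1 : ‖F x - F 0‖ ≤ C * x := by
        have := hlip x 0
        simpa [abs_of_pos hx0] using this
      have h2 : ‖F (-x) - F 0‖ ≤ C * x := by
        have := hlip (-x) 0
        simpa [abs_of_pos hx0] using this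
      have : ‖h x‖ ≤ C * x + C * x := hsplit ▸ (norm_add_le _ _).trans (add_le_add h1 h2)
      calc ‖h x‖ ≤ C * x + C * x := this
        _ = 2 * C * ‖x ^ (1:ℝ)‖ := by
            rw [Real.rpow_one, Real.norm_of_nonneg hx0.le]; ring
    exact (mellin_differentiableAt_of_isBigO_rpow hloc h_top (by linarith) h_bot
      hs').differentiableWithinAt
  · -- the identity for re s > 0
    intro s hs
    have hg_conv : MellinConvergent g s :=
      mellinConv_of_cont hg_cont hg_top hs
    have hmell_one := hasMellin_one_Ioc (s := s) (by simpa using hs)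
    have hind_eq : ind = fun x => (2 * F 0) •
        (Set.indicator (Ioc (0:ℝ) 1) (fun _ => (1:ℂ)) x) := by
      funext x
      by_cases hx : x ∈ Ioc (0:ℝ) 1 <;> simp [hind_def, Set.indicator, hx]
    have hind_conv : MellinConvergent ind s := by
      rw [hind_eq]; exact hmell_one.1.const_smul _
    have hind_mellin : mellin ind s = 2 * F 0 / s := by
      rw [hind_eq, mellin_const_smul, hmell_one.2, smul_eq_mul, mul_one_div]
    have hsub := hasMellin_sub hg_conv hind_conv
    have hmg : mellin g s = 2 * F 0 / s + mellin h s := by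
      have : mellin h s = mellin g s - mellin ind s := hsub.2
      rw [this, hind_mellin]; ring
    -- now compute the real integral
    have hsplit : (∫ a : ℝ, F a *
        (if a = 0 then 0 else Complex.exp ((s - 1) * (Real.log |a| : ℂ))))
        = (∫ a in Iic (0:ℝ), F a *
            (if a = 0 then 0 else Complex.exp ((s - 1) * (Real.log |a| : ℂ))))
          + ∫ a in Ioi (0:ℝ), F a *
            (if a = 0 then 0 else Complex.exp ((s - 1) * (Real.log |a| : ℂ))) := by
      rw [intervalIntegral.integral_Iic_add_Ioi (hIic hs) (hIoi hs)]
    have hneg : (∫ a in Iic (0:ℝ), F a *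
        (if a = 0 then 0 else Complex.exp ((s - 1) * (Real.log |a| : ℂ))))
        = ∫ x in Ioi (0:ℝ), F (-x) *
            (if -x = 0 then 0 else Complex.exp ((s - 1) * (Real.log |(-x)| : ℂ))) := by
      rw [integral_comp_neg_Ioi (0:ℝ) (fun a : ℝ => F a *
        (if a = 0 then 0 else Complex.exp ((s - 1) * (Real.log |a| : ℂ)))), neg_zero]
    have hcomb : (∫ x in Ioi (0:ℝ), F (-x) *
          (if -x = 0 then 0 else Complex.exp ((s - 1) * (Real.log |(-x)| : ℂ))))
        + (∫ a in Ioi (0:ℝ), F a *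
            (if a = 0 then 0 else Complex.exp ((s - 1) * (Real.log |a| : ℂ))))
        = mellin g s := by
      rw [← integral_add (hIoiNeg hs) (hIoi hs)]
      refine setIntegral_congr_fun measurableSet_Ioi (fun x hx => ?_)
      rw [weight_eq (s := s) hx, weight_eq_neg (s := s) hx]
      simp only [hg_def, smul_eq_mul]
      ring
    rw [hsplit, hneg, hcomb, hmg]
end

section
/- The Dirichlet-kernel limit underlying the Fourier-analysis evaluation of E(T) in Proposition 2.7 of Lecture IV: for every Schwartz function F : ℝ → ℂ, the function t ↦ (sin(T·t)/t)·F(t) (given the value T·F(0) at t = 0) is absolutely integrable on ℝ for each real T, and the limit as T → +∞ of ∫_ℝ (sin(T·t)/t)·F(t) dt exists and equals π·F(0). -/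
open MeasureTheory Filter Topology

section DirichletAux

open Real
open scoped FourierTransform

open scoped Classical in
lemma dirichlet_aux_integrable (F : SchwartzMap ℝ ℂ) (T : ℝ) :
    Integrable (fun t : ℝ =>
      if t = 0 then (T : ℂ) * F 0 else ((Real.sin (T * t) / t : ℝ) : ℂ) * F t) := by
  have h1 : Integrable (fun t : ℝ => ((Real.sin (T * t) / t : ℝ) : ℂ) * F t) := by
    refine F.integrable.bdd_mul (c := |T|) ?_ (Filter.Eventually.of_forall fun t => ?_)
    · exact (Complex.measurable_ofReal.comp
        ((Real.measurable_sin.comp (measurable_const.mul measurable_id)).div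
          measurable_id)).aestronglyMeasurable
    · rcases eq_or_ne t 0 with rfl | ht
      · simp
      · rw [Complex.norm_real, Real.norm_eq_abs, abs_div, div_le_iff₀ (abs_pos.2 ht)]
        calc |Real.sin (T * t)| ≤ |T * t| := Real.abs_sin_le_abs
          _ = |T| * |t| := abs_mul _ _
  refine h1.congr ?_
  filter_upwards [compl_mem_ae_iff.2 (measure_singleton (0:ℝ))] with t ht
  simp only [Set.mem_compl_iff, Set.mem_singleton_iff] at ht
  simp [ht]

open scoped Classical in
lemma dirichlet_aux_eq (F : SchwartzMap ℝ ℂ) (T : ℝ) (hT : 0 < T) :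
    (∫ t : ℝ, (if t = 0 then (T : ℂ) * F 0 else ((Real.sin (T * t) / t : ℝ) : ℂ) * F t))
      = (π : ℂ) * ∫ ξ in (-(T / (2 * π)))..(T / (2 * π)), 𝓕 (⇑F) ξ := by
  set a : ℝ := T / (2 * π) with ha
  have hπ : (0:ℝ) < π := Real.pi_pos
  have ha0 : 0 < a := by positivity
  have hTa : T = 2 * π * a := by rw [ha]; field_simp
  rw [intervalIntegral.integral_of_le (by linarith)]
  have hG : ∀ ξ : ℝ, 𝓕 (⇑F) ξ = ∫ t : ℝ, Complex.exp (↑(-2 * π * t * ξ) * Complex.I) * F t := by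
    intro ξ
    rw [Real.fourier_real_eq_integral_exp_smul]
    simp [smul_eq_mul]
  simp_rw [hG]
  have hFub : Integrable (Function.uncurry fun ξ t : ℝ =>
      Complex.exp (↑(-2 * π * t * ξ) * Complex.I) * F t)
      ((volume.restrict (Set.Ioc (-a) a)).prod volume) := by
    have hF2 : Integrable (fun p : ℝ × ℝ => F p.2)
        ((volume.restrict (Set.Ioc (-a) a)).prod volume) := by
      have h1 : Integrable (fun _ : ℝ => (1:ℂ)) (volume.restrict (Set.Ioc (-a) a)) :=
        integrableOn_const (by simp)
      simpa using h1.mul_prod F.integrable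
    refine hF2.bdd_mul (c := 1) ?_ (Filter.Eventually.of_forall fun p => ?_)
    · apply Continuous.aestronglyMeasurable
      fun_prop
    · simp [Complex.norm_exp]
  have hswap := MeasureTheory.integral_integral_swap hFub
  rw [hswap, ← MeasureTheory.integral_const_mul]
  refine (integral_congr_ae (Filter.Eventually.of_forall fun t => ?_)).symm
  rcases eq_or_ne t 0 with rfl | ht
  · simp only [if_pos rfl, mul_zero, zero_mul, Complex.ofReal_zero, Complex.exp_zero, one_mul]
    rw [MeasureTheory.setIntegral_const, measureReal_def, Real.volume_Ioc]
    have h2a : a - -a = 2 * a := by ring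
    rw [h2a, ENNReal.toReal_ofReal (by positivity), hTa]
    push_cast
    rw [Complex.real_smul]
    push_cast
    ring
  · rw [if_neg ht]
    set c : ℂ := ((-2 * π * t : ℝ) : ℂ) * Complex.I with hc
    have hcne : c ≠ 0 := by
      rw [hc]
      refine mul_ne_zero (Complex.ofReal_ne_zero.2 ?_) Complex.I_ne_zero
      exact mul_ne_zero (mul_ne_zero (by norm_num) Real.pi_ne_zero) ht
    have harg : ∀ x : ℝ, ((-2 * π * t * x : ℝ) : ℂ) * Complex.I = c * (x:ℂ) := by
      intro x; rw [hc]; push_cast; ring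
    simp_rw [harg, MeasureTheory.integral_mul_const]
    rw [← intervalIntegral.integral_of_le (by linarith : -a ≤ a),
      integral_exp_mul_complex hcne]
    have e1 : c * ((a:ℝ):ℂ) = ((-(2*π*a*t) : ℝ) : ℂ) * Complex.I := by
      rw [hc]; push_cast; ring
    have e2 : c * ((-a:ℝ):ℂ) = (((2*π*a*t) : ℝ) : ℂ) * Complex.I := by
      rw [hc]; push_cast; ring
    rw [e1, e2, Complex.exp_mul_I, Complex.exp_mul_I]
    rw [← Complex.ofReal_cos, ← Complex.ofReal_sin, ← Complex.ofReal_cos, ← Complex.ofReal_sin]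
    rw [Real.cos_neg, Real.sin_neg, hTa]
    have hnum : (((Real.cos (2*π*a*t) : ℝ) : ℂ) + ((-Real.sin (2*π*a*t) : ℝ) : ℂ) * Complex.I -
        (((Real.cos (2*π*a*t) : ℝ) : ℂ) + ((Real.sin (2*π*a*t) : ℝ) : ℂ) * Complex.I))
        = -2 * ((Real.sin (2*π*a*t) : ℝ) : ℂ) * Complex.I := by push_cast; ring
    rw [hnum, hc]
    have htC : (t:ℂ) ≠ 0 := Complex.ofReal_ne_zero.2 ht
    have hπC : ((π:ℝ):ℂ) ≠ 0 := Complex.ofReal_ne_zero.2 Real.pi_ne_zero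
    push_cast
    field_simp

lemma dirichlet_aux_inv (F : SchwartzMap ℝ ℂ) : ∫ ξ : ℝ, 𝓕 (⇑F) ξ = F 0 := by
  have hGi : Integrable (𝓕 (⇑F)) := by
    have := (SchwartzMap.fourierTransformCLM ℂ F).integrable (μ := volume)
    rwa [SchwartzMap.fourierTransformCLM_apply] at this
  have h := Continuous.fourierInv_fourier_eq F.continuous F.integrable hGi
  have h0 := congrFun h 0
  rw [Real.fourierInv_eq'] at h0
  simpa using h0

lemma dirichlet_aux_tendsto (F : SchwartzMap ℝ ℂ) :
    Tendsto (fun T : ℝ => (π : ℂ) * ∫ ξ in (-(T / (2 * π)))..(T / (2 * π)), 𝓕 (⇑F) ξ)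
      atTop (𝓝 ((π : ℂ) * F 0)) := by
  have hGi : Integrable (𝓕 (⇑F)) := by
    have := (SchwartzMap.fourierTransformCLM ℂ F).integrable (μ := volume)
    rwa [SchwartzMap.fourierTransformCLM_apply] at this
  have hb : Tendsto (fun T : ℝ => T / (2 * π)) atTop atTop :=
    Tendsto.atTop_div_const (by positivity) tendsto_id
  have ha : Tendsto (fun T : ℝ => -(T / (2 * π))) atTop atBot :=
    tendsto_neg_atBot_iff.2 hb
  have := MeasureTheory.intervalIntegral_tendsto_integral hGi ha hb
  rw [dirichlet_aux_inv F] at this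
  exact this.const_mul _

end DirichletAux

open scoped Classical in
/-- The Dirichlet-kernel limit: for a Schwartz function `F`,
`∫ (sin(Tt)/t)·F(t) dt → π·F(0)` as `T → +∞`. -/
theorem stmt5 (F : SchwartzMap ℝ ℂ) :
    (∀ T : ℝ, Integrable (fun t : ℝ =>
      if t = 0 then (T : ℂ) * F 0 else ((Real.sin (T * t) / t : ℝ) : ℂ) * F t)) ∧
    Tendsto (fun T : ℝ => ∫ t : ℝ,
        (if t = 0 then (T : ℂ) * F 0 else ((Real.sin (T * t) / t : ℝ) : ℂ) * F t))
      atTop (𝓝 ((Real.pi : ℂ) * F 0)) := by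
  refine ⟨dirichlet_aux_integrable F, ?_⟩
  refine (dirichlet_aux_tendsto F).congr' ?_
  filter_upwards [Ioi_mem_atTop (0:ℝ)] with T hT
  exact (dirichlet_aux_eq F T hT).symm
end

section
/- The oscillatory-integral evaluation which is the analytic core of Proposition 2.7 of Lecture IV and of the s = w computation in §4 of Lecture VII: let F, G : ℝ → ℂ be smooth compactly supported functions with F(0) = G(0). For each real T, the function t ↦ (exp(i·T·t)·F(t) − exp(−i·T·t)·G(t))/(i·t), extended across t = 0 by its limiting value, is continuous with compact support (hence absolutely integrable), and the limit as T → +∞ of I(T) = ∫_ℝ (exp(i·T·t)·F(t) − exp(−i·T·t)·G(t))/(i·t) dt exists and equals 2π·F(0). -/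
open MeasureTheory Filter Topology FourierTransform Real

lemma aux_ext (f : ℝ → ℂ) (hf : Continuous f) (hs : HasCompactSupport f)
    (hd : DifferentiableAt ℝ f 0) (h0 : f 0 = 0) :
    ∃ h : ℝ → ℂ, Continuous h ∧ HasCompactSupport h ∧
      ∀ t : ℝ, t ≠ 0 → h t = f t / (Complex.I * t) := by
  classical
  set h : ℝ → ℂ := fun t =>
    if t = 0 then deriv f 0 / Complex.I else f t / (Complex.I * t) with hh
  have hspec : ∀ t : ℝ, t ≠ 0 → h t = f t / (Complex.I * t) := by
    intro t ht; simp [hh, ht]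
  refine ⟨h, ?_, ?_, hspec⟩
  · -- continuity
    rw [continuous_iff_continuousAt]
    intro x
    rcases eq_or_ne x 0 with rfl | hx
    · -- continuity at 0
      have hslope : Tendsto (slope f 0) (𝓝[≠] 0) (𝓝 (deriv f 0)) :=
        hasDerivAt_iff_tendsto_slope.mp hd.hasDerivAt
      have h1 : Tendsto (fun t => slope f 0 t / Complex.I) (𝓝[≠] 0)
          (𝓝 (deriv f 0 / Complex.I)) := hslope.div_const _
      have h2 : Tendsto h (𝓝[≠] 0) (𝓝 (deriv f 0 / Complex.I)) := by
        refine h1.congr' ?_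
        filter_upwards [self_mem_nhdsWithin] with t ht
        have ht' : (t : ℝ) ≠ 0 := ht
        rw [hspec t ht']
        simp only [slope, vsub_eq_sub, sub_zero, h0]
        rw [Complex.real_smul]
        push_cast
        field_simp
      have h3 : Tendsto h (pure (0:ℝ)) (𝓝 (deriv f 0 / Complex.I)) := by
        have : h 0 = deriv f 0 / Complex.I := by simp [hh]
        simpa [this] using tendsto_pure_nhds h (0:ℝ)
      have h4 : Tendsto h (𝓝 (0:ℝ)) (𝓝 (deriv f 0 / Complex.I)) := by
        rw [← nhdsNE_sup_pure]
        exact h2.sup h3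
      have h00 : h 0 = deriv f 0 / Complex.I := by simp [hh]
      unfold ContinuousAt
      rw [h00]
      exact h4
    · -- continuity away from 0
      have : ContinuousAt (fun t : ℝ => f t / (Complex.I * t)) x := by
        apply ContinuousAt.div (hf.continuousAt)
        · exact (continuous_const.mul Complex.continuous_ofReal).continuousAt
        · simp [Complex.ofReal_ne_zero.mpr hx, Complex.I_ne_zero]
      refine this.congr ?_
      filter_upwards [isOpen_ne.mem_nhds hx] with t ht
      exact (hspec t ht).symm
  · -- compact support
    have hsub : Function.support h ⊆ tsupport f ∪ {0} := by
      intro t ht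
      by_contra hmem
      simp only [Set.mem_union, Set.mem_singleton_iff, not_or] at hmem
      obtain ⟨h1, h2⟩ := hmem
      have hft : f t = 0 := image_eq_zero_of_notMem_tsupport h1
      have : h t = 0 := by rw [hspec t h2, hft, zero_div]
      exact ht this
    have hcl : IsClosed (tsupport f ∪ {0}) :=
      (isClosed_tsupport f).union isClosed_singleton
    have hcp : IsCompact (tsupport f ∪ {0}) := hs.union isCompact_singleton
    exact hcp.of_isClosed_subset (isClosed_tsupport h)
      (closure_minimal hsub hcl)

lemma aux_sub {f g : ℝ → ℂ} (hf : HasCompactSupport f) (hg : HasCompactSupport g) :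
    HasCompactSupport (fun t => f t - g t) := by
  apply IsCompact.of_isClosed_subset (hf.union hg) (isClosed_tsupport _)
  apply closure_minimal _ ((isClosed_tsupport f).union (isClosed_tsupport g))
  intro t ht
  by_contra hmem
  simp only [Set.mem_union, not_or] at hmem
  obtain ⟨h1, h2⟩ := hmem
  apply ht
  simp [image_eq_zero_of_notMem_tsupport h1, image_eq_zero_of_notMem_tsupport h2]

lemma aux_schwartz (F : ℝ → ℂ) (hF : ContDiff ℝ (⊤ : ℕ∞) F) (hFs : HasCompactSupport F) :
    ∃ S : SchwartzMap ℝ ℂ, ⇑S = F := by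
  refine ⟨⟨F, hF.of_le (by simp), ?_⟩, rfl⟩
  intro k n
  have hDs : HasCompactSupport (fun x : ℝ => ‖iteratedFDeriv ℝ n F x‖) :=
    (hFs.iteratedFDeriv n).norm
  have hsupp : HasCompactSupport (fun x : ℝ => ‖x‖ ^ k * ‖iteratedFDeriv ℝ n F x‖) :=
    hDs.mul_left
  have hcont : Continuous (fun x : ℝ => ‖x‖ ^ k * ‖iteratedFDeriv ℝ n F x‖) :=
    (continuous_norm.pow k).mul
      (hF.continuous_iteratedFDeriv (by exact_mod_cast le_top)).norm
  obtain ⟨C, hC⟩ := hsupp.exists_bound_of_continuous hcont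
  refine ⟨C, fun x => ?_⟩
  have := hC x
  rwa [Real.norm_eq_abs, abs_of_nonneg (by positivity)] at this

lemma aux_fourier_int (F : ℝ → ℂ) (hF : ContDiff ℝ (⊤ : ℕ∞) F) (hFs : HasCompactSupport F) :
    Integrable (𝓕 F) := by
  obtain ⟨S, hS⟩ := aux_schwartz F hF hFs
  have : Integrable (⇑(SchwartzMap.fourierTransformCLM ℂ S)) := SchwartzMap.integrable _
  rwa [SchwartzMap.fourierTransformCLM_apply, SchwartzMap.fourier_coe, hS] at this

lemma aux_int_fourier (F : ℝ → ℂ) (hF : ContDiff ℝ (⊤ : ℕ∞) F) (hFs : HasCompactSupport F) :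
    ∫ w : ℝ, 𝓕 F w = F 0 := by
  have hFi : Integrable F := hF.continuous.integrable_of_hasCompactSupport hFs
  have hinv := hFi.fourierInv_fourier_eq (aux_fourier_int F hF hFs)
    (hF.continuous.continuousAt (x := 0))
  rw [← hinv, Real.fourierInv_eq]
  simp

lemma aux_g_formula (F : ℝ → ℂ) (u : ℝ) :
    𝓕 F (-(2*π)⁻¹ * u) = ∫ t : ℝ, Complex.exp (Complex.I * t * u) * F t := by
  rw [Real.fourier_eq']
  apply integral_congr_ae
  filter_upwards with t
  rw [smul_eq_mul]
  congr 1
  have h1 : (inner ℝ t (-(2*π)⁻¹ * u) : ℝ) = t * (-(2*π)⁻¹ * u) := by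
    rw [RCLike.inner_apply]; simp; ring
  rw [h1]
  have h2 : -2 * π * (t * (-(2*π)⁻¹ * u)) = t * u := by
    field_simp
  rw [h2]
  push_cast
  ring_nf

lemma aux_RL_formula (K : ℝ → ℂ) (T : ℝ) :
    𝓕 K (T/(2*π)) = ∫ t : ℝ, Complex.exp (-(Complex.I * T * t)) * K t := by
  rw [Real.fourier_eq']
  apply integral_congr_ae
  filter_upwards with t
  rw [smul_eq_mul]
  congr 1
  have h1 : (inner ℝ t (T/(2*π)) : ℝ) = t * (T/(2*π)) := by
    rw [RCLike.inner_apply]; simp; ring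
  rw [h1]
  have h2 : -2 * π * (t * (T/(2*π))) = -(T*t) := by
    field_simp
  rw [h2]
  push_cast
  ring_nf

lemma aux_exp_norm (t u : ℝ) : ‖Complex.exp (Complex.I * t * u)‖ = 1 := by
  rw [Complex.norm_exp]
  simp

lemma aux_interval_exp (T t : ℝ) (ht : t ≠ 0) :
    (∫ u in (-T)..T, Complex.exp (Complex.I * t * u)) =
      (Complex.exp (Complex.I * T * t) - Complex.exp (-(Complex.I * T * t))) /
        (Complex.I * t) := by
  have hc : (Complex.I * (t : ℂ)) ≠ 0 := by
    simp [Complex.I_ne_zero, Complex.ofReal_ne_zero.mpr ht]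
  have h := integral_exp_mul_complex (a := -T) (b := T) hc
  rw [h]
  have e1 : Complex.I * (t : ℂ) * ((T : ℝ) : ℂ) = Complex.I * T * t := by ring
  have e2 : Complex.I * (t : ℂ) * ((-T : ℝ) : ℂ) = -(Complex.I * T * t) := by
    push_cast; ring
  rw [e1, e2]

lemma aux_fubini (F : ℝ → ℂ) (hFc : Continuous F) (hFi : Integrable F)
    (T : ℝ) (hT : 0 ≤ T) :
    (∫ t : ℝ, F t * ∫ u in (-T)..T, Complex.exp (Complex.I * t * u)) =
      ∫ u in (-T)..T, ∫ t : ℝ, Complex.exp (Complex.I * t * u) * F t := by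
  have hle : (-T) ≤ T := by linarith
  set ν : Measure ℝ := volume.restrict (Set.Ioc (-T) T) with hν
  haveI : IsFiniteMeasure ν := by
    constructor
    rw [hν, Measure.restrict_apply_univ]
    exact measure_Ioc_lt_top
  have hprod : Integrable (fun p : ℝ × ℝ => F p.1 * Complex.exp (Complex.I * p.1 * p.2))
      (volume.prod ν) := by
    have hmeas : AEStronglyMeasurable
        (fun p : ℝ × ℝ => F p.1 * Complex.exp (Complex.I * p.1 * p.2)) (volume.prod ν) := by
      apply Continuous.aestronglyMeasurable
      exact (hFc.comp continuous_fst).mul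
        (Complex.continuous_exp.comp
          ((continuous_const.mul (Complex.continuous_ofReal.comp continuous_fst)).mul
            (Complex.continuous_ofReal.comp continuous_snd)))
    have hbound : Integrable (fun p : ℝ × ℝ => ‖F p.1‖ * (1:ℝ)) (volume.prod ν) :=
      hFi.norm.mul_prod (integrable_const (1:ℝ))
    apply hbound.mono' hmeas
    filter_upwards with p
    rw [norm_mul, aux_exp_norm, mul_one]
  calc (∫ t : ℝ, F t * ∫ u in (-T)..T, Complex.exp (Complex.I * t * u))
      = ∫ t : ℝ, ∫ u, F t * Complex.exp (Complex.I * t * u) ∂ν := by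
        apply integral_congr_ae
        filter_upwards with t
        rw [intervalIntegral.integral_of_le hle, ← hν, MeasureTheory.integral_const_mul]
    _ = ∫ u, ∫ t : ℝ, F t * Complex.exp (Complex.I * t * u) ∂volume ∂ν :=
        integral_integral_swap hprod
    _ = ∫ u in (-T)..T, ∫ t : ℝ, Complex.exp (Complex.I * t * u) * F t := by
        rw [intervalIntegral.integral_of_le hle, ← hν]
        apply integral_congr_ae
        filter_upwards with u
        apply integral_congr_ae
        filter_upwards with t
        ring

/-- The oscillatory-integral evaluation: for smooth compactly supported `F, G` with
`F(0) = G(0)`, the function `t ↦ (e^{iTt}F(t) − e^{-iTt}G(t))/(it)` extends continuously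
with compact support, and its integral tends to `2π·F(0)` as `T → +∞`. -/
theorem stmt6 (F G : ℝ → ℂ)
    (hF : ContDiff ℝ (⊤ : ℕ∞) F) (hFs : HasCompactSupport F)
    (hG : ContDiff ℝ (⊤ : ℕ∞) G) (hGs : HasCompactSupport G)
    (h0 : F 0 = G 0) :
    (∀ T : ℝ, ∃ h : ℝ → ℂ, Continuous h ∧ HasCompactSupport h ∧
      ∀ t : ℝ, t ≠ 0 →
        h t = (Complex.exp (Complex.I * T * t) * F t -
               Complex.exp (-(Complex.I * T * t)) * G t) / (Complex.I * t)) ∧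
    Tendsto (fun T : ℝ => ∫ t : ℝ,
        (Complex.exp (Complex.I * T * t) * F t -
         Complex.exp (-(Complex.I * T * t)) * G t) / (Complex.I * t))
      atTop (𝓝 (((2 * Real.pi : ℝ) : ℂ) * F 0)) := by
  have hFd : Differentiable ℝ F := hF.differentiable (by simp)
  have hGd : Differentiable ℝ G := hG.differentiable (by simp)
  have hFc : Continuous F := hF.continuous
  have hGc : Continuous G := hG.continuous
  have hFint : Integrable F := hFc.integrable_of_hasCompactSupport hFs
  have hexpd : ∀ c : ℂ, Differentiable ℝ fun t : ℝ => Complex.exp (c * t) := by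
    intro c
    have h1 : Differentiable ℝ fun t : ℝ => c * (t : ℂ) :=
      Complex.ofRealCLM.differentiable.const_mul c
    have h2 : Differentiable ℝ Complex.exp := Complex.differentiable_exp
    exact h2.comp h1
  have hexpc : ∀ c : ℂ, Continuous fun t : ℝ => Complex.exp (c * t) := fun c =>
    Complex.continuous_exp.comp (continuous_const.mul Complex.continuous_ofReal)
  have hne : ∀ᵐ t : ℝ, t ≠ 0 := by
    simp [ae_iff, measure_singleton]
  -- part 1
  have part1 : ∀ T : ℝ, ∃ h : ℝ → ℂ, Continuous h ∧ HasCompactSupport h ∧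
      ∀ t : ℝ, t ≠ 0 →
        h t = (Complex.exp (Complex.I * T * t) * F t -
               Complex.exp (-(Complex.I * T * t)) * G t) / (Complex.I * t) := by
    intro T
    set f : ℝ → ℂ := fun t => Complex.exp (Complex.I * T * t) * F t -
      Complex.exp (-(Complex.I * T * t)) * G t with hf
    have he1 : (fun t : ℝ => Complex.exp (Complex.I * T * t)) =
        fun t : ℝ => Complex.exp ((Complex.I * T) * t) := by
      funext t; ring_nf
    have he2 : (fun t : ℝ => Complex.exp (-(Complex.I * T * t))) =
        fun t : ℝ => Complex.exp ((-(Complex.I * T)) * t) := by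
      funext t; ring_nf
    have d1 : Differentiable ℝ fun t : ℝ => Complex.exp (Complex.I * T * t) := by
      rw [he1]; exact hexpd _
    have d2 : Differentiable ℝ fun t : ℝ => Complex.exp (-(Complex.I * T * t)) := by
      rw [he2]; exact hexpd _
    have c1 : Continuous fun t : ℝ => Complex.exp (Complex.I * T * t) := by
      rw [he1]; exact hexpc _
    have c2 : Continuous fun t : ℝ => Complex.exp (-(Complex.I * T * t)) := by
      rw [he2]; exact hexpc _
    have hfc : Continuous f := (c1.mul hFc).sub (c2.mul hGc)
    have hfs : HasCompactSupport f := aux_sub hFs.mul_left hGs.mul_left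
    have hfd : DifferentiableAt ℝ f 0 := ((d1.mul hFd).sub (d2.mul hGd)).differentiableAt
    have hf0 : f 0 = 0 := by simp [hf, h0]
    obtain ⟨h, h1c, h1s, h1spec⟩ := aux_ext f hfc hfs hfd hf0
    exact ⟨h, h1c, h1s, fun t ht => h1spec t ht⟩
  refine ⟨part1, ?_⟩
  -- part 2
  -- the K function
  set D : ℝ → ℂ := fun t => F t - G t with hD
  have hD0 : D 0 = 0 := by simp [hD, h0]
  obtain ⟨K, hKc, hKs, hKspec⟩ := aux_ext D (hFc.sub hGc) (aux_sub hFs hGs)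
    ((hFd.sub hGd).differentiableAt) hD0
  -- the g function
  set g : ℝ → ℂ := fun u => 𝓕 F (-(2*π)⁻¹ * u) with hg
  have hgint : Integrable g := by
    have h1 : Integrable (𝓕 F) := aux_fourier_int F hF hFs
    have h2 : (-(2*π)⁻¹ : ℝ) ≠ 0 := by
      simp [Real.pi_ne_zero]
    exact h1.comp_mul_left' h2
  have hgval : ∫ u : ℝ, g u = ((2 * Real.pi : ℝ) : ℂ) * F 0 := by
    simp only [hg]
    rw [Measure.integral_comp_mul_left (fun w => 𝓕 F w) (-(2*π)⁻¹)]
    rw [aux_int_fourier F hF hFs]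
    have habs : ((-(2*π)⁻¹ : ℝ))⁻¹ = -(2*π) := by
      rw [inv_neg, inv_inv]
    rw [habs, abs_neg, abs_of_pos (by positivity), Complex.real_smul]
  -- Riemann-Lebesgue term
  have hRL : Tendsto (fun T : ℝ => ∫ t : ℝ, Complex.exp (-(Complex.I*T*t)) * K t)
      atTop (𝓝 0) := by
    have hcc : Tendsto (fun T : ℝ => T / (2*π)) atTop (cocompact ℝ) := by
      have h1 : Tendsto (fun T : ℝ => T / (2*π)) atTop atTop :=
        tendsto_id.atTop_div_const (by positivity)
      rw [cocompact_eq_atBot_atTop]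
      exact h1.mono_right le_sup_right
    have h2 := (Real.zero_at_infty_fourier K).comp hcc
    refine h2.congr fun T => aux_RL_formula K T
  -- key identity
  have key : ∀ T : ℝ, 0 ≤ T →
      (∫ t : ℝ, (Complex.exp (Complex.I * T * t) * F t -
          Complex.exp (-(Complex.I * T * t)) * G t) / (Complex.I * t))
        = (∫ u in (-T)..T, g u) +
            ∫ t : ℝ, Complex.exp (-(Complex.I * T * t)) * K t := by
    intro T hT
    obtain ⟨h, hhc, hhs, hhspec⟩ := part1 T
    have hhint : Integrable h := hhc.integrable_of_hasCompactSupport hhs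
    have c2 : Continuous fun t : ℝ => Complex.exp (-(Complex.I * T * t)) := by
      have he2 : (fun t : ℝ => Complex.exp (-(Complex.I * T * t))) =
          fun t : ℝ => Complex.exp ((-(Complex.I * T)) * t) := by
        funext t; ring_nf
      rw [he2]; exact hexpc _
    have hBc : Continuous (fun t : ℝ => Complex.exp (-(Complex.I * T * t)) * K t) :=
      c2.mul hKc
    have hBint : Integrable (fun t : ℝ => Complex.exp (-(Complex.I * T * t)) * K t) :=
      hBc.integrable_of_hasCompactSupport (hKs.mul_left)
    have hABh : ∀ t : ℝ, t ≠ 0 →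
        (F t * ∫ u in (-T)..T, Complex.exp (Complex.I * t * u)) +
          Complex.exp (-(Complex.I * T * t)) * K t = h t := by
      intro t ht
      have hIt : (Complex.I * (t : ℂ)) ≠ 0 := by
        simp [Complex.I_ne_zero, Complex.ofReal_ne_zero.mpr ht]
      rw [aux_interval_exp T t ht, hKspec t ht, hhspec t ht, hD]
      field_simp
      ring
    have hAe : ∀ᵐ t : ℝ, h t - Complex.exp (-(Complex.I * T * t)) * K t =
        F t * ∫ u in (-T)..T, Complex.exp (Complex.I * t * u) := by
      filter_upwards [hne] with t ht
      rw [← hABh t ht]; ring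
    have hAint : Integrable
        (fun t : ℝ => F t * ∫ u in (-T)..T, Complex.exp (Complex.I * t * u)) :=
      (hhint.sub hBint).congr hAe
    have step1 : (∫ t : ℝ, (Complex.exp (Complex.I * T * t) * F t -
          Complex.exp (-(Complex.I * T * t)) * G t) / (Complex.I * t))
        = ∫ t : ℝ, h t := by
      apply integral_congr_ae
      filter_upwards [hne] with t ht
      rw [hhspec t ht]
    have step2 : (∫ t : ℝ, h t) = ∫ t : ℝ,
        ((F t * ∫ u in (-T)..T, Complex.exp (Complex.I * t * u)) +
          Complex.exp (-(Complex.I * T * t)) * K t) := by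
      apply integral_congr_ae
      filter_upwards [hne] with t ht
      rw [hABh t ht]
    rw [step1, step2, integral_add hAint hBint]
    congr 1
    calc (∫ t : ℝ, F t * ∫ u in (-T)..T, Complex.exp (Complex.I * t * u))
        = ∫ u in (-T)..T, ∫ t : ℝ, Complex.exp (Complex.I * t * u) * F t :=
          aux_fubini F hFc hFint T hT
      _ = ∫ u in (-T)..T, g u := by
          apply intervalIntegral.integral_congr
          intro u _
          exact (aux_g_formula F u).symm
  -- conclusion
  have hIg : Tendsto (fun T : ℝ => ∫ u in (-T)..T, g u) atTop (𝓝 (∫ u : ℝ, g u)) :=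
    intervalIntegral_tendsto_integral hgint tendsto_neg_atTop_atBot tendsto_id
  have hsum : Tendsto (fun T : ℝ => (∫ u in (-T)..T, g u) +
      ∫ t : ℝ, Complex.exp (-(Complex.I * T * t)) * K t) atTop
      (𝓝 ((∫ u : ℝ, g u) + 0)) := hIg.add hRL
  rw [hgval, add_zero] at hsum
  apply hsum.congr'
  filter_upwards [eventually_ge_atTop (0:ℝ)] with T hT
  exact (key T hT).symm
end
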